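/- arXiv:1011.3451 — 2 statements merged into one kernel-verified Lean document; each statement's English description precedes it below -/
import Mathlib

section
/- Let X ⊆ R^d be a finite set with no three points collinear. Then for every pair of distinct points a, b ∈ X, the set sep(a,b) of hyperplane-realizable partitions of X separating a and b is a minimal transversal for the full subdivisions of H(X). -/
open scoped RealInnerProductSpace

noncomputable section

def IsPartition {α : Type*} (X : Set α) (P : Set (Set α)) : Prop :=
  (∀ U ∈ P, U.Nonempty) ∧ P.PairwiseDisjoint id ∧ ⋃₀ P = X

def Separates {α : Type*} (P : Set (Set α)) (a b : α) : Prop :=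
  ∃ U ∈ P, ∃ V ∈ P, U ≠ V ∧ a ∈ U ∧ b ∈ V

def IsFull {α : Type*} (X : Set α) (S : Set (Set (Set α))) : Prop :=
  ∀ a ∈ X, ∀ b ∈ X, a ≠ b → ∃ P ∈ S, Separates P a b

def IsTransversal {α : Type*} (X : Set α) (C T : Set (Set (Set α))) : Prop :=
  T ⊆ C ∧ ∀ S ⊆ C, IsFull X S → (S ∩ T).Nonempty

def IsMinimalTransversal {α : Type*} (X : Set α) (C T : Set (Set (Set α))) : Prop :=
  IsTransversal X C T ∧ ∀ T' ⊆ T, IsTransversal X C T' → T' = T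

def sep {α : Type*} (C : Set (Set (Set α))) (a b : α) : Set (Set (Set α)) :=
  {P ∈ C | Separates P a b}

abbrev Euc (d : ℕ) : Type := EuclideanSpace ℝ (Fin d)

def RealizedByHyperplane {d : ℕ} (X : Set (Euc d)) (P : Set (Set (Euc d))) : Prop :=
  P = {X} ∨ ∃ (v : Euc d) (c : ℝ), v ≠ 0 ∧ (∀ x ∈ X, ⟪v, x⟫ ≠ c) ∧
    (X ∩ {x | ⟪v, x⟫ < c}).Nonempty ∧ (X ∩ {x | c < ⟪v, x⟫}).Nonempty ∧
    P = {X ∩ {x | ⟪v, x⟫ < c}, X ∩ {x | c < ⟪v, x⟫}}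

def HSet {d : ℕ} (X : Set (Euc d)) : Set (Set (Set (Euc d))) :=
  {P | RealizedByHyperplane X P}

def GenPos {d : ℕ} (X : Set (Euc d)) : Prop :=
  ∀ (v : Euc d) (c : ℝ), v ≠ 0 → (X ∩ {x | ⟪v, x⟫ = c}).encard ≤ (d : ℕ∞)

def phi (d k : ℕ) : ℕ := ∑ i ∈ Finset.range (d + 1), (k - 1).choose i

def eta (d k : ℕ) : ℕ := ∑ i ∈ Finset.range (d + 1), (k - 2).choose i

/-!
`sep(a, b)` is a transversal because a full family must separate `a` from `b`. For minimality
it suffices that every other pair `x, y` is separated by some hyperplane that does not separate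
`a, b`: then, for `P₀ ∈ sep(a, b)`, the non-separating partitions together with `P₀` form a full
family meeting `sep(a, b)` only in `P₀`. Such a hyperplane exists when no three points are
collinear. Say `y ∉ {a, b}`. If `y ∉ conv {x, a, b}`, cut `y` off from `x, a, b`. Otherwise
`x ∉ conv {y, a, b}`, since the two memberships together put `x`, and hence `y`, on the
segment `[a, b]`; so cut `x` off from `y, a, b`.
-/

theorem Separates.symm {α : Type*} {P : Set (Set α)} {a b : α} (h : Separates P a b) :
    Separates P b a := by
  obtain ⟨U, hU, V, hV, hUV, haU, hbV⟩ := h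
  exact ⟨V, hV, U, hU, hUV.symm, hbV, haU⟩

theorem not_separates_of_mem {α : Type*} {P : Set (Set α)} (hP : P.PairwiseDisjoint id)
    {W : Set α} (hW : W ∈ P) {a b : α} (ha : a ∈ W) (hb : b ∈ W) : ¬ Separates P a b := by
  rintro ⟨U, hU, V, hV, hUV, haU, hbV⟩
  exact hUV ((hP.elim_set hU hW a haU ha).trans (hP.elim_set hV hW b hbV hb).symm)

section Combinatorics

variable {α : Type*} {X : Set α} {C : Set (Set (Set α))} {a b : α}

theorem isTransversal_sep (ha : a ∈ X) (hb : b ∈ X) (hab : a ≠ b) :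
    IsTransversal X C (sep C a b) := by
  refine ⟨fun P hP => hP.1, fun S hSC hS => ?_⟩
  obtain ⟨P, hPS, hP⟩ := hS a ha b hb hab
  exact ⟨P, hPS, hSC hPS, hP⟩

theorem isFull_insert_diff_sep {P₀ : Set (Set α)} (hP₀ : P₀ ∈ sep C a b)
    (hC : ∀ x ∈ X, ∀ y ∈ X, x ≠ y → y ≠ a → y ≠ b →
      ∃ P ∈ C, Separates P x y ∧ ¬ Separates P a b) :
    IsFull X (insert P₀ (C \ sep C a b)) := by
  have hC' : ∀ x ∈ X, ∀ y ∈ X, x ≠ y → y ≠ a → y ≠ b →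
      ∃ P ∈ insert P₀ (C \ sep C a b), Separates P x y := by
    intro x hx y hy hxy hya hyb
    obtain ⟨P, hPC, hxy, hab⟩ := hC x hx y hy hxy hya hyb
    exact ⟨P, Or.inr ⟨hPC, fun h => hab h.2⟩, hxy⟩
  intro x hx y hy hxy
  by_cases hy' : y ≠ a ∧ y ≠ b
  · exact hC' x hx y hy hxy hy'.1 hy'.2
  by_cases hx' : x ≠ a ∧ x ≠ b
  · obtain ⟨P, hP, hyx⟩ := hC' y hy x hx hxy.symm hx'.1 hx'.2
    exact ⟨P, hP, hyx.symm⟩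
  obtain ⟨rfl, rfl⟩ | ⟨rfl, rfl⟩ : (x = a ∧ y = b) ∨ (x = b ∧ y = a) := by grind
  · exact ⟨P₀, Set.mem_insert _ _, hP₀.2⟩
  · exact ⟨P₀, Set.mem_insert _ _, hP₀.2.symm⟩

theorem isMinimalTransversal_sep (ha : a ∈ X) (hb : b ∈ X) (hab : a ≠ b)
    (hC : ∀ x ∈ X, ∀ y ∈ X, x ≠ y → y ≠ a → y ≠ b →
      ∃ P ∈ C, Separates P x y ∧ ¬ Separates P a b) :
    IsMinimalTransversal X C (sep C a b) := by
  refine ⟨isTransversal_sep ha hb hab, fun T hT hTC => hT.antisymm fun P₀ hP₀ => ?_⟩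
  have hS : insert P₀ (C \ sep C a b) ⊆ C := Set.insert_subset hP₀.1 Set.sdiff_subset
  obtain ⟨Q, hQS, hQT⟩ := hTC.2 _ hS (isFull_insert_diff_sep hP₀ hC)
  rcases hQS with rfl | hQ
  · exact hQT
  · exact absurd (hT hQT) hQ.2

end Combinatorics

theorem Convex.mem_of_mem_convexJoin_singleton_swap {𝕜 E : Type*} [Field 𝕜] [LinearOrder 𝕜]
    [IsStrictOrderedRing 𝕜] [AddCommGroup E] [Module 𝕜 E] {K : Set E} (hK : Convex 𝕜 K)
    {x y : E} (hxy : x ≠ y) (hy : y ∈ convexJoin 𝕜 {x} K) (hx : x ∈ convexJoin 𝕜 {y} K) :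
    x ∈ K := by
  simp only [convexJoin_singleton_left, Set.mem_iUnion₂] at hx hy
  obtain ⟨z₁, hz₁, α, β, hα, hβ, hαβ, rfl⟩ := hy
  obtain ⟨z₂, hz₂, γ, δ, hγ, hδ, hγδ, hx⟩ := hx
  set s := γ * β + δ
  have hs : s ≠ 0 := by
    intro hs
    have hδ0 : δ = 0 := by nlinarith
    have hβ0 : β = 0 := by nlinarith
    exact hxy (by simp [hβ0, show α = 1 by linarith])
  -- eliminating `y` from the two segment relations writes `x` as a convex combination of `z₁, z₂`
  have hsx : s • x = (γ * β) • z₁ + δ • z₂ := by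
    linear_combination (norm := module) -hx + (γ * hαβ + hγδ) • x
  refine hK.segment_subset hz₁ hz₂ ⟨γ * β / s, δ / s, by positivity, by positivity,
    by rw [← add_div, div_self hs], ?_⟩
  rw [← inv_smul_smul₀ hs x, hsx]
  module

theorem exists_mem_hSet_separating_convexHull {d : ℕ} {X : Set (Euc d)} (hX : X.Finite)
    {p : Euc d} {s : Set (Euc d)} (hp : p ∈ X) (hsX : s ⊆ X) (hs : s.Nonempty)
    (hps : p ∉ convexHull ℝ s) :
    ∃ P ∈ HSet X, (∀ q ∈ s, Separates P p q) ∧ ∀ q ∈ s, ∀ r ∈ s, ¬ Separates P q r := by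
  obtain ⟨f, u, hfp, hfu⟩ := geometric_hahn_banach_point_closed (convex_convexHull ℝ s)
    ((hX.subset hsX).isCompact_convexHull (𝕜 := ℝ)).isClosed hps
  obtain ⟨c, ⟨hpc, hcu⟩, hcX⟩ := ((Set.Ioo_infinite hfp).sdiff (hX.image f)).nonempty
  obtain ⟨v, hv⟩ : ∃ v : Euc d, ∀ z, ⟪v, z⟫ = f z :=
    ⟨_, fun _ => InnerProductSpace.toDual_symm_apply⟩
  have hpc' : ⟪v, p⟫ < c := by rwa [hv]
  have hsc : ∀ q ∈ s, c < ⟪v, q⟫ := fun q hq => by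
    rw [hv]; exact hcu.trans (hfu q (subset_convexHull ℝ s hq))
  obtain ⟨q₀, hq₀⟩ := hs
  set A := X ∩ {x | ⟪v, x⟫ < c}
  set B := X ∩ {x | c < ⟪v, x⟫}
  have hpA : p ∈ A := ⟨hp, hpc'⟩
  have hsB : ∀ q ∈ s, q ∈ B := fun q hq => ⟨hsX hq, hsc q hq⟩
  have hAB : A ≠ B := fun h => lt_asymm hpc' (h ▸ hpA).2
  have hv0 : v ≠ 0 := by
    rintro rfl
    simp only [inner_zero_left] at hpc' hsc
    exact lt_asymm hpc' (hsc q₀ hq₀)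
  have hdisj : ({A, B} : Set (Set (Euc d))).PairwiseDisjoint id :=
    Set.pairwise_pair_of_symm.2 fun _ =>
      Set.disjoint_left.2 fun _ hxA hxB => lt_asymm (b := c) hxA.2 hxB.2
  refine ⟨{A, B}, Or.inr ⟨v, c, hv0, fun x hx h => hcX ⟨x, hx, (hv x) ▸ h⟩, ⟨p, hpA⟩,
    ⟨q₀, hsB q₀ hq₀⟩, rfl⟩, fun q hq => ⟨A, .inl rfl, B, .inr rfl, hAB, hpA, hsB q hq⟩,
    fun q hq r hr => not_separates_of_mem hdisj (.inr rfl) (hsB q hq) (hsB r hr)⟩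

theorem exists_mem_hSet_separates_not_separates {d : ℕ} {X : Set (Euc d)} (hX : X.Finite)
    (hcol : ∀ a ∈ X, ∀ b ∈ X, ∀ c ∈ X, a ≠ b → a ≠ c → b ≠ c →
      ¬ Collinear ℝ ({a, b, c} : Set (Euc d)))
    {a b x y : Euc d} (ha : a ∈ X) (hb : b ∈ X) (hab : a ≠ b) (hx : x ∈ X) (hy : y ∈ X)
    (hxy : x ≠ y) (hya : y ≠ a) (hyb : y ≠ b) :
    ∃ P ∈ HSet X, Separates P x y ∧ ¬ Separates P a b := by
  have hy_seg : y ∉ segment ℝ a b := fun h => hcol y hy a ha b hb hya hyb hab <| by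
    simpa only [Set.insert_comm y a] using (mem_segment_iff_wbtw.1 h).collinear
  by_cases hyc : y ∈ convexHull ℝ {x, a, b}
  · have hxc : x ∉ convexHull ℝ {y, a, b} := by
      intro hxc
      rw [convexHull_insert (Set.insert_nonempty _ _), convexHull_pair] at hyc hxc
      have hx_seg := (convex_segment a b).mem_of_mem_convexJoin_singleton_swap hxy hyc hxc
      exact hy_seg (convexJoin_subset (Set.singleton_subset_iff.2 hx_seg) subset_rfl
        (convex_segment a b) hyc)
    obtain ⟨P, hP, hxs, hs⟩ := exists_mem_hSet_separating_convexHull hX hx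
      (Set.insert_subset hy (Set.pair_subset ha hb)) (Set.insert_nonempty _ _) hxc
    exact ⟨P, hP, hxs y (by simp), hs a (by simp) b (by simp)⟩
  · obtain ⟨P, hP, hys, hs⟩ := exists_mem_hSet_separating_convexHull hX hy
      (Set.insert_subset hx (Set.pair_subset ha hb)) (Set.insert_nonempty _ _) hyc
    exact ⟨P, hP, (hys x (by simp)).symm, hs a (by simp) b (by simp)⟩

theorem stmt5 {d : ℕ} (X : Set (Euc d)) (hX : X.Finite)
    (hcol : ∀ a ∈ X, ∀ b ∈ X, ∀ c ∈ X, a ≠ b → a ≠ c → b ≠ c → ¬ Collinear ℝ ({a, b, c} : Set (Euc d)))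
    (a : Euc d) (ha : a ∈ X) (b : Euc d) (hb : b ∈ X) (hab : a ≠ b) :
    IsMinimalTransversal X (HSet X) (sep (HSet X) a b) :=
  isMinimalTransversal_sep ha hb hab fun _ hx _ hy hxy hya hyb =>
    exists_mem_hSet_separates_not_separates hX hcol ha hb hab hx hy hxy hya hyb
end
end

section
/- Main theorem: Let X be a finite subset of R^d with each point painted one of k colors (k ≥ 2). If every subset of X of size at most (d+1)·η_d(k) + k can be partitioned by hyperplanes along the colors, then all of X can be partitioned by hyperplanes along the colors, where η_d(k) = sum_{i=0}^{d} binomial(k-2, i). -/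
open scoped RealInnerProductSpace

noncomputable section

def PartByHyp {d k : ℕ} (color : Euc d → Fin k) (S : Set (Euc d)) : Prop :=
  ∃ F : Set (Euc d × ℝ),
    (∀ p ∈ F, p.1 ≠ 0) ∧
    (∀ p ∈ F, ∀ x ∈ S, ⟪p.1, x⟫ ≠ p.2) ∧
    (∀ x ∈ S, ∀ y ∈ S, color x ≠ color y → ∃ p ∈ F,
      (⟪p.1, x⟫ < p.2 ∧ p.2 < ⟪p.1, y⟫) ∨ (⟪p.1, y⟫ < p.2 ∧ p.2 < ⟪p.1, x⟫)) ∧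
    (∀ p ∈ F, ∀ x ∈ S, ∀ y ∈ S, color x = color y →
      ¬ ((⟪p.1, x⟫ < p.2 ∧ p.2 < ⟪p.1, y⟫) ∨ (⟪p.1, y⟫ < p.2 ∧ p.2 < ⟪p.1, x⟫)))

/-! Fix `x`, `y` of different colours. A hyperplane with `x` on its negative side can be rescaled
to `{w | ⟪u, w⟫ = ⟪u, x⟫ + 1}`, so for a fixed set `T` of colours on the positive side the
admissible normals `u` form an intersection of open half-spaces of `ℝ^d`, one per point. If no
hyperplane separates `x` from `y` along the colours, each of these intersections is empty, and by
Helly's theorem `d + 1` of the points already witness this. Only the sets `T` realised on one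
representative per colour matter; they are sign patterns of `k - 2` linear functionals on a
half-space of `ℝ^d` (the colours of `x` and `y` have fixed signs), and a deletion–restriction
induction bounds their number by `η_d(k) = ∑_{i ≤ d} C(k - 2, i)`. The representatives together
with the Helly witnesses of the realised patterns form a subset of `X` of size at most
`k + (d + 1) η_d(k)` that cannot be partitioned. -/

open Module Finset

section SignPatterns

variable {E ι : Type*} [AddCommGroup E] [Module ℝ E] [DecidableEq ι]

def cell (f : ι → Dual ℝ E) (b : ι → ℝ) (s T : Finset ι) : Set E :=
  {u | ∀ i ∈ s, if i ∈ T then b i < f i u else f i u < b i}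

open Classical in
def signPatterns (C : Set E) (f : ι → Dual ℝ E) (b : ι → ℝ) (s : Finset ι) :
    Finset (Finset ι) :=
  {T ∈ s.powerset | (C ∩ cell f b s T).Nonempty}

variable {C : Set E} {f : ι → Dual ℝ E} {b : ι → ℝ} {s T : Finset ι}

theorem mem_signPatterns : T ∈ signPatterns C f b s ↔ T ⊆ s ∧ (C ∩ cell f b s T).Nonempty := by
  simp [signPatterns]

theorem cell_mono {s' : Finset ι} (h : s' ⊆ s) : cell f b s T ⊆ cell f b s' T :=
  fun _ hu i hi => hu i (h hi)

theorem cell_congr {T' : Finset ι} (h : ∀ i ∈ s, (i ∈ T ↔ i ∈ T')) :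
    cell f b s T = cell f b s T' := by
  ext u
  exact forall₂_congr fun i hi => by simp only [h i hi]

theorem mem_iff_lt_of_mem_cell {u : E} (hu : u ∈ cell f b s T) {i : ι} (hi : i ∈ s) :
    i ∈ T ↔ b i < f i u := by
  have := hu i hi
  split_ifs at this with h
  · exact iff_of_true h this
  · exact iff_of_false h this.not_gt

theorem convex_cell : Convex ℝ (cell f b s T) := by
  refine convex_iff_forall_pos.2 fun u hu v hv p q hp hq hpq i hi => ?_
  have hu := hu i hi
  have hv := hv i hi
  simp only [map_add, map_smul, smul_eq_mul] at hu hv ⊢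
  have hb : b i = p * b i + q * b i := by rw [← add_mul, hpq, one_mul]
  split_ifs at hu hv ⊢ <;> nlinarith [mul_lt_mul_of_pos_left hu hp, mul_lt_mul_of_pos_left hv hq]

theorem Convex.exists_eq_of_le_of_le {K : Set E} (hK : Convex ℝ K) (g : Dual ℝ E) {u v : E}
    (hu : u ∈ K) (hv : v ∈ K) {r : ℝ} (hur : g u ≤ r) (hrv : r ≤ g v) : ∃ w ∈ K, g w = r :=
  (hK.linear_image g).ordConnected.out ⟨u, hu, rfl⟩ ⟨v, hv, rfl⟩ ⟨hur, hrv⟩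

theorem finrank_vectorSpan_inter_lt [FiniteDimensional ℝ E] (g : Dual ℝ E) (r : ℝ) {u v : E}
    (hu : u ∈ C) (hv : v ∈ C) (huv : g u ≠ g v) :
    finrank ℝ (vectorSpan ℝ (C ∩ {w | g w = r})) < finrank ℝ (vectorSpan ℝ C) := by
  refine Submodule.finrank_lt_finrank_of_lt
    (lt_of_le_of_lt (b := vectorSpan ℝ C ⊓ LinearMap.ker g)
      (le_inf (vectorSpan_mono ℝ Set.inter_subset_left) ?_) (inf_lt_left.2 fun hle => huv ?_))
  · rw [vectorSpan_def, Submodule.span_le]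
    rintro _ ⟨p, ⟨-, hp⟩, q, ⟨-, hq⟩, rfl⟩
    simp_all [vsub_eq_sub]
  · have := hle (vsub_mem_vectorSpan ℝ hu hv)
    simpa [vsub_eq_sub, sub_eq_zero] using this

theorem card_signPatterns_insert_le {a : ι} (ha : a ∉ s) :
    #(signPatterns C f b (insert a s)) ≤ #(signPatterns C f b s) +
      #{T ∈ signPatterns C f b (insert a s) |
        a ∉ T ∧ insert a T ∈ signPatterns C f b (insert a s)} := by
  set P := signPatterns C f b (insert a s)
  set A := {T ∈ P | a ∈ T}.image (·.erase a)
  set B := {T ∈ P | a ∉ T}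
  have hA : #A = #{T ∈ P | a ∈ T} :=
    card_image_of_injOn fun T hT T' hT' h => by
      rw [← insert_erase (mem_filter.1 hT).2, ← insert_erase (mem_filter.1 hT').2]
      exact congrArg (insert a) h
  have hunion : A ∪ B ⊆ signPatterns C f b s := by
    intro T hT
    simp only [A, B, mem_union, mem_image, mem_filter, P, mem_signPatterns] at hT
    rw [mem_signPatterns]
    rcases hT with ⟨T, ⟨⟨hTs, u, huC, hu⟩, -⟩, rfl⟩ | ⟨⟨hTs, u, huC, hu⟩, haT⟩
    · refine ⟨(erase_subset_erase a hTs).trans (erase_insert_subset a s), u, huC, ?_⟩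
      rw [cell_congr (T' := T) fun i hi => by
        rw [mem_erase, and_iff_right (ne_of_mem_of_not_mem hi ha)]]
      exact cell_mono (subset_insert a s) hu
    · exact ⟨(subset_insert_iff_of_notMem haT).1 hTs, u, huC, cell_mono (subset_insert a s) hu⟩
  have hinter : A ∩ B ⊆ {T ∈ P | a ∉ T ∧ insert a T ∈ P} := by
    intro T hT
    simp only [A, B, mem_inter, mem_image, mem_filter] at hT ⊢
    obtain ⟨⟨T', ⟨hT'P, haT'⟩, rfl⟩, hTP, haT⟩ := hT
    exact ⟨hTP, haT, by rwa [insert_erase haT']⟩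
  calc #P = #A + #B := by rw [hA, card_filter_add_card_filter_not]
    _ = #(A ∪ B) + #(A ∩ B) := (card_union_add_card_inter A B).symm
    _ ≤ _ := add_le_add (card_le_card hunion) (card_le_card hinter)

theorem exists_mem_cell_lt_lt_of_insert {a : ι} (ha : a ∉ s) (haT : a ∉ T)
    (hT : T ∈ signPatterns C f b (insert a s))
    (hT' : insert a T ∈ signPatterns C f b (insert a s)) :
    ∃ u ∈ C ∩ cell f b s T, ∃ v ∈ C ∩ cell f b s T, f a u < b a ∧ b a < f a v := by
  obtain ⟨-, u, huC, hu⟩ := mem_signPatterns.1 hT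
  obtain ⟨-, v, hvC, hv⟩ := mem_signPatterns.1 hT'
  have hcongr : cell f b s (insert a T) = cell f b s T :=
    cell_congr fun i hi => by rw [mem_insert, or_iff_right (ne_of_mem_of_not_mem hi ha)]
  refine ⟨u, ⟨huC, cell_mono (subset_insert a s) hu⟩, v,
    ⟨hvC, hcongr ▸ cell_mono (subset_insert a s) hv⟩, ?_, ?_⟩
  · simpa [haT] using hu a (mem_insert_self a s)
  · simpa using hv a (mem_insert_self a s)

theorem mem_signPatterns_inter_hyperplane (hC : Convex ℝ C) {a : ι} (ha : a ∉ s) (haT : a ∉ T)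
    (hT : T ∈ signPatterns C f b (insert a s))
    (hT' : insert a T ∈ signPatterns C f b (insert a s)) :
    T ∈ signPatterns (C ∩ {w | f a w = b a}) f b s := by
  obtain ⟨u, hu, v, hv, hua, hva⟩ := exists_mem_cell_lt_lt_of_insert ha haT hT hT'
  obtain ⟨w, ⟨hwC, hw⟩, hwa⟩ :=
    (hC.inter convex_cell).exists_eq_of_le_of_le (f a) hu hv hua.le hva.le
  exact mem_signPatterns.2
    ⟨(subset_insert_iff_of_notMem haT).1 (mem_signPatterns.1 hT).1, w, ⟨hwC, hwa⟩, hw⟩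

theorem sum_range_choose_succ (m e : ℕ) :
    ∑ i ∈ range (e + 1), (m + 1).choose i =
      ∑ i ∈ range (e + 1), m.choose i + ∑ i ∈ range e, m.choose i := by
  rw [sum_range_succ', sum_range_succ' (fun i => m.choose i)]
  simp only [Nat.choose_succ_succ', sum_add_distrib, Nat.choose_zero_right]
  ring

theorem card_signPatterns_le [FiniteDimensional ℝ E] (hC : Convex ℝ C) {e : ℕ}
    (he : finrank ℝ (vectorSpan ℝ C) ≤ e) :
    #(signPatterns C f b s) ≤ ∑ i ∈ range (e + 1), (#s).choose i := by
  induction s using Finset.induction_on generalizing C e with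
  | empty =>
    calc #(signPatterns C f b ∅) ≤ #(powerset (∅ : Finset ι)) :=
          card_le_card fun T hT => mem_powerset.2 (mem_signPatterns.1 hT).1
      _ ≤ _ := by simp [sum_range_succ']
  | insert a s ha ih =>
    set P := signPatterns C f b (insert a s)
    have hdoubled : #{T ∈ P | a ∉ T ∧ insert a T ∈ P} ≤ ∑ i ∈ range e, (#s).choose i := by
      rcases Finset.eq_empty_or_nonempty {T ∈ P | a ∉ T ∧ insert a T ∈ P} with hD | ⟨T, hT⟩
      · simp [hD]
      obtain ⟨hTP, haT, hT'P⟩ := mem_filter.1 hT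
      obtain ⟨u, ⟨hu, -⟩, v, ⟨hv, -⟩, hua, hva⟩ := exists_mem_cell_lt_lt_of_insert ha haT hTP hT'P
      have hrank := finrank_vectorSpan_inter_lt (f a) (b a) hu hv (hua.trans hva).ne
      obtain ⟨e, rfl⟩ := Nat.exists_eq_add_of_lt (hrank.trans_le he)
      calc #{T ∈ P | a ∉ T ∧ insert a T ∈ P}
          ≤ #(signPatterns (C ∩ {w | f a w = b a}) f b s) := card_le_card fun T hT => by
            obtain ⟨hTP, haT, hT'P⟩ := mem_filter.1 hT
            exact mem_signPatterns_inter_hyperplane hC ha haT hTP hT'P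
        _ ≤ _ := ih (hC.inter (convex_hyperplane (f a).isLinear (b a))) (by omega)
    calc #P ≤ #(signPatterns C f b s) + #{T ∈ P | a ∉ T ∧ insert a T ∈ P} :=
          card_signPatterns_insert_le ha
      _ ≤ ∑ i ∈ range (e + 1), (#s).choose i + ∑ i ∈ range e, (#s).choose i :=
          add_le_add (ih hC he) hdoubled
      _ = _ := by rw [card_insert_of_notMem ha, sum_range_choose_succ]

theorem card_signPatterns_le_of_subset {t : Finset ι} (hst : s ⊆ t)
    (hconst : ∀ i ∈ t \ s, ∀ u ∈ C, ∀ v ∈ C, b i < f i u → b i < f i v) :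
    #(signPatterns C f b t) ≤ #(signPatterns C f b s) := by
  refine card_le_card_of_injOn (· ∩ s) (fun T hT => ?_) fun T hT T' hT' hTT' => ?_
  · obtain ⟨-, u, huC, hu⟩ := mem_signPatterns.1 hT
    refine mem_signPatterns.2 ⟨inter_subset_right, u, huC, ?_⟩
    rw [cell_congr (T' := T) fun i hi => by rw [mem_inter, and_iff_left hi]]
    exact cell_mono hst hu
  · obtain ⟨hTt, u, huC, hu⟩ := mem_signPatterns.1 hT
    obtain ⟨hT't, v, hvC, hv⟩ := mem_signPatterns.1 hT'
    ext i
    by_cases hit : i ∈ t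
    · by_cases his : i ∈ s
      · simpa [his] using congrArg (i ∈ ·) hTT'
      · rw [mem_iff_lt_of_mem_cell hu hit, mem_iff_lt_of_mem_cell hv hit]
        have := hconst i (mem_sdiff.2 ⟨hit, his⟩)
        exact ⟨this u huC v hvC, this v hvC u huC⟩
    · exact iff_of_false (fun h => hit (hTt h)) fun h => hit (hT't h)

end SignPatterns

theorem card_signPatterns_halfSpace_le {E ι : Type*} [NormedAddCommGroup E]
    [InnerProductSpace ℝ E] [FiniteDimensional ℝ E] [Fintype ι] [DecidableEq ι] (a : ι → E)
    {i j : ι} (hij : i ≠ j) (hi : a i = 0) :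
    #(signPatterns {u | 1 < ⟪a j, u⟫} (fun l => innerₛₗ ℝ (a l)) (fun _ => 1) univ) ≤
      ∑ l ∈ range (finrank ℝ E + 1), (Fintype.card ι - 2).choose l := by
  have hconst : ∀ l ∈ univ \ (univ \ {i, j}), ∀ u ∈ {u | 1 < ⟪a j, u⟫},
      ∀ v ∈ {u | 1 < ⟪a j, u⟫}, 1 < innerₛₗ ℝ (a l) u → 1 < innerₛₗ ℝ (a l) v := by
    intro l hl u _ v hv hu
    obtain rfl | rfl : l = i ∨ l = j := by simpa using hl
    · norm_num [hi] at hu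
    · exact hv
  calc _ ≤ #(signPatterns {u | 1 < ⟪a j, u⟫} (fun l => innerₛₗ ℝ (a l)) (fun _ => 1)
          (univ \ {i, j})) := card_signPatterns_le_of_subset (subset_univ _) hconst
    _ ≤ _ := card_signPatterns_le (convex_halfSpace_gt (innerₛₗ ℝ (a j)).isLinear 1)
          (Submodule.finrank_le _)
    _ = _ := by rw [card_sdiff_of_subset (subset_univ _), card_univ, card_pair hij]

section ColorSplits

variable {d k : ℕ} (color : Euc d → Fin k)

def IsColorSplit (S : Set (Euc d)) (v : Euc d) (c : ℝ) (T : Finset (Fin k)) : Prop :=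
  ∀ z ∈ S, if color z ∈ T then c < ⟪v, z⟫ else ⟪v, z⟫ < c

def splitDual (S : Set (Euc d)) (x : Euc d) (T : Finset (Fin k)) : Set (Euc d) :=
  {u | IsColorSplit color S u (⟪u, x⟫ + 1) T}

variable {color} {S : Set (Euc d)} {v x y z : Euc d} {c : ℝ} {T : Finset (Fin k)}

theorem IsColorSplit.mem_iff (h : IsColorSplit color S v c T) (hz : z ∈ S) :
    color z ∈ T ↔ c < ⟪v, z⟫ := by
  have := h z hz
  split_ifs at this with hT
  · exact iff_of_true hT this
  · exact iff_of_false hT this.not_gt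

theorem IsColorSplit.inner_lt (h : IsColorSplit color S v c T) (hz : z ∈ S)
    (hzT : color z ∉ T) : ⟪v, z⟫ < c := by
  simpa [hzT] using h z hz

theorem IsColorSplit.inner_ne (h : IsColorSplit color S v c T) (hz : z ∈ S) : ⟪v, z⟫ ≠ c := by
  have := h z hz
  split_ifs at this
  exacts [this.ne', this.ne]

theorem IsColorSplit.not_lt_lt (h : IsColorSplit color S v c T) {z' : Euc d} (hz : z ∈ S)
    (hz' : z' ∈ S) (hcol : color z = color z') : ¬(⟪v, z⟫ < c ∧ c < ⟪v, z'⟫) := fun ⟨h₁, h₂⟩ =>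
  h₁.not_gt ((h.mem_iff hz).1 (hcol ▸ (h.mem_iff hz').2 h₂))

theorem IsColorSplit.neg (h : IsColorSplit color S v c T) :
    IsColorSplit color S (-v) (-c) Tᶜ := by
  intro z hz
  have := h z hz
  rw [inner_neg_left]
  split_ifs at this ⊢ <;> simp_all

theorem IsColorSplit.smul (h : IsColorSplit color S v c T) {t : ℝ} (ht : 0 < t) :
    IsColorSplit color S (t • v) (t * c) T := by
  intro z hz
  have := h z hz
  rw [real_inner_smul_left]
  split_ifs at this ⊢ <;> exact mul_lt_mul_of_pos_left this ht

theorem IsColorSplit.exists_mem_splitDual (h : IsColorSplit color S v c T) (hx : x ∈ S)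
    (hxT : color x ∉ T) : ∃ u, u ∈ splitDual color S x T := by
  have hs : 0 < c - ⟪v, x⟫ := sub_pos.2 (h.inner_lt hx hxT)
  refine ⟨(c - ⟪v, x⟫)⁻¹ • v, ?_⟩
  have hc : ⟪(c - ⟪v, x⟫)⁻¹ • v, x⟫ + 1 = (c - ⟪v, x⟫)⁻¹ * c := by
    rw [real_inner_smul_left]
    field_simp
    ring
  simpa only [splitDual, Set.mem_ofPred_eq, hc] using h.smul (inv_pos.2 hs)

theorem notMem_of_mem_splitDual {u : Euc d} (hu : u ∈ splitDual color S x T) (hx : x ∈ S) :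
    color x ∉ T := fun hxT => by
  have := hu x hx
  simp only [hxT, if_true] at this
  linarith

theorem convex_splitDual : Convex ℝ (splitDual color S x T) := by
  refine convex_iff_forall_pos.2 fun u hu v hv p q hp hq hpq z hz => ?_
  have hu := hu z hz
  have hv := hv z hz
  have hone : (1 : ℝ) = p * 1 + q * 1 := by rw [← add_mul, hpq, one_mul]
  simp only [inner_add_left, real_inner_smul_left] at hu hv ⊢
  split_ifs at hu hv ⊢ <;>
    nlinarith [mul_lt_mul_of_pos_left hu hp, mul_lt_mul_of_pos_left hv hq]

theorem exists_finset_splitDual_eq_empty (hS : S.Finite) (h : splitDual color S x T = ∅) :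
    ∃ Z : Finset (Euc d), ↑Z ⊆ S ∧ #Z ≤ d + 1 ∧ splitDual color Z x T = ∅ := by
  by_contra! hsmall
  obtain ⟨u, hu⟩ := Convex.helly_theorem' (F := fun z => splitDual color {z} x T)
    (s := hS.toFinset) (fun _ _ => convex_splitDual) fun Z hZ hcard => by
      obtain ⟨u, hu⟩ :=
        hsmall Z (by simpa using hZ) (by simpa [finrank_euclideanSpace_fin] using hcard)
      exact ⟨u, Set.mem_iInter₂.2 fun z hz _ hz' => (Set.mem_singleton_iff.1 hz') ▸ hu z hz⟩
  exact h.subset fun z hz => Set.mem_iInter₂.1 hu z (hS.mem_toFinset.2 hz) z rfl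

theorem mem_signPatterns_of_mem_splitDual {u : Euc d} (hu : u ∈ splitDual color S x T)
    (hy : y ∈ S) (hyT : color y ∈ T) {ι : Type*} [Fintype ι] [DecidableEq ι] (rep : ι → Euc d)
    (hrep : ∀ γ, rep γ ∈ S) :
    ({γ | color (rep γ) ∈ T} : Finset ι) ∈
      signPatterns {u | 1 < ⟪y - x, u⟫} (fun γ => innerₛₗ ℝ (rep γ - x)) (fun _ => 1) univ := by
  refine mem_signPatterns.2 ⟨subset_univ _, u, ?_, fun γ _ => ?_⟩
  · have := hu y hy
    simp only [hyT, if_true] at this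
    simp only [Set.mem_ofPred_eq, inner_sub_left, real_inner_comm u]
    linarith
  · have := hu _ (hrep γ)
    simp only [mem_filter, mem_univ, true_and, innerₛₗ_apply_apply, real_inner_comm u,
      inner_sub_right]
    split_ifs at this ⊢ <;> linarith

end ColorSplits

section PartByHyp

variable {d k : ℕ} {color : Euc d → Fin k} {S : Set (Euc d)} {x y : Euc d}

theorem PartByHyp.exists_isColorSplit (h : PartByHyp color S) (hx : x ∈ S) (hy : y ∈ S)
    (hxy : color x ≠ color y) :
    ∃ v c T, IsColorSplit color S v c T ∧ color x ∉ T ∧ color y ∈ T := by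
  classical
  obtain ⟨F, -, havoid, hsep, hsame⟩ := h
  obtain ⟨⟨v, c⟩, hp, hxy'⟩ := hsep x hx y hy hxy
  set T : Finset (Fin k) := {γ | ∃ z ∈ S, color z = γ ∧ c < ⟪v, z⟫}
  have hsplit : IsColorSplit color S v c T := by
    intro z hz
    have hne := havoid _ hp z hz
    split_ifs with hzT
    · obtain ⟨z', hz', hcol, hz'c⟩ := by simpa [T] using hzT
      have := hsame _ hp z hz z' hz' hcol.symm
      by_contra hle
      exact this (Or.inl ⟨lt_of_le_of_ne (not_lt.1 hle) hne, hz'c⟩)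
    · exact lt_of_le_of_ne (not_lt.1 fun hcz => hzT (by simpa [T] using ⟨z, hz, rfl, hcz⟩)) hne
  rcases hxy' with ⟨hxc, hcy⟩ | ⟨hyc, hcx⟩
  · exact ⟨v, c, T, hsplit, fun h => ((hsplit.mem_iff hx).1 h).not_gt hxc,
      (hsplit.mem_iff hy).2 hcy⟩
  · refine ⟨-v, -c, Tᶜ, hsplit.neg, ?_, ?_⟩
    · rw [hsplit.neg.mem_iff hx, inner_neg_left]; linarith
    · rw [hsplit.neg.mem_iff hy, inner_neg_left]; linarith

theorem partByHyp_of_forall_exists_isColorSplit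
    (h : ∀ x ∈ S, ∀ y ∈ S, color x ≠ color y →
      ∃ v c T, IsColorSplit color S v c T ∧ color x ∉ T ∧ color y ∈ T) :
    PartByHyp color S := by
  refine ⟨{p | p.1 ≠ 0 ∧ ∃ T, IsColorSplit color S p.1 p.2 T}, fun p hp => hp.1,
    fun p ⟨_, T, hT⟩ z hz => hT.inner_ne hz, fun x hx y hy hxy => ?_,
    fun p ⟨_, T, hT⟩ z hz z' hz' hcol => ?_⟩
  · obtain ⟨v, c, T, hT, hxT, hyT⟩ := h x hx y hy hxy
    have hxc := hT.inner_lt hx hxT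
    have hcy := (hT.mem_iff hy).1 hyT
    refine ⟨(v, c), ⟨fun hv => ?_, T, hT⟩, Or.inl ⟨hxc, hcy⟩⟩
    rw [show v = 0 from hv, inner_zero_left] at hxc hcy
    linarith
  · rintro (h | h)
    exacts [hT.not_lt_lt hz hz' hcol h, hT.not_lt_lt hz' hz hcol.symm h]

end PartByHyp

section Certificate

variable {d k : ℕ} {color : Euc d → Fin k} {X : Set (Euc d)} {x y : Euc d}

theorem exists_colorRepresentatives (hx : x ∈ X) (hy : y ∈ X) (hxy : color x ≠ color y) :
    ∃ rep : Fin k → Euc d, (∀ γ, rep γ ∈ X) ∧ (∀ z ∈ X, color (rep (color z)) = color z) ∧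
      rep (color x) = x ∧ rep (color y) = y := by
  have : ∀ γ, ∃ w ∈ X, ∀ z ∈ X, color z = γ → color w = γ := fun γ => by
    by_cases h : ∃ z ∈ X, color z = γ
    · obtain ⟨z, hz, rfl⟩ := h
      exact ⟨z, hz, fun _ _ _ => rfl⟩
    · exact ⟨x, hx, fun z hz hzγ => (h ⟨z, hz, hzγ⟩).elim⟩
  choose r hrX hr using this
  refine ⟨Function.update (Function.update r (color x) x) (color y) y, fun γ => ?_,
    fun z hz => ?_, by simp [hxy], by simp⟩
  · simp only [Function.update_apply]
    split_ifs
    exacts [hy, hx, hrX γ]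
  · simp only [Function.update_apply]
    split_ifs with h₁ h₂
    exacts [h₁ ▸ rfl, h₂ ▸ rfl, hr _ z hz rfl]

theorem exists_small_subset_splitDual_eq_empty (hX : X.Finite) (hx : x ∈ X) (hy : y ∈ X)
    (hxy : color x ≠ color y) (hXdual : ∀ T, color y ∈ T → splitDual color X x T = ∅) :
    ∃ S ⊆ X, S.ncard ≤ (d + 1) * (∑ i ∈ range (d + 1), (k - 2).choose i) + k ∧
      x ∈ S ∧ y ∈ S ∧ ∀ T, color y ∈ T → splitDual color S x T = ∅ := by
  obtain ⟨rep, hrepX, hrep, hrepx, hrepy⟩ := exists_colorRepresentatives hx hy hxy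
  set P := signPatterns {u | 1 < ⟪y - x, u⟫} (fun γ => innerₛₗ ℝ (rep γ - x)) (fun _ => 1) univ
  have hP : #P ≤ ∑ i ∈ range (d + 1), (k - 2).choose i := by
    have := card_signPatterns_halfSpace_le (fun γ => rep γ - x) hxy (by simp [hrepx])
    rwa [hrepy, Fintype.card_fin, finrank_euclideanSpace_fin] at this
  have hZ : ∀ T, ∃ Z : Finset (Euc d), ↑Z ⊆ X ∧ #Z ≤ d + 1 ∧
      (color y ∈ T → splitDual color Z x T = ∅) := fun T => by
    by_cases hT : color y ∈ T
    · obtain ⟨Z, hZX, hZ, hZdual⟩ := exists_finset_splitDual_eq_empty hX (hXdual T hT)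
      exact ⟨Z, hZX, hZ, fun _ => hZdual⟩
    · exact ⟨∅, by simp, by simp, fun h => (hT h).elim⟩
  choose Z hZX hZcard hZ using hZ
  set S := univ.image rep ∪ P.biUnion Z
  have hrepS : ∀ γ, rep γ ∈ S := fun γ => mem_union_left _ (mem_image_of_mem rep (mem_univ γ))
  refine ⟨S, ?_, ?_, hrepx ▸ hrepS _, hrepy ▸ hrepS _, fun T hT => ?_⟩
  · intro z hz
    simp only [S, coe_union, coe_image, coe_univ, Set.image_univ, coe_biUnion, Set.mem_union,
      Set.mem_range, Set.mem_iUnion] at hz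
    obtain ⟨γ, rfl⟩ | ⟨T, -, hz⟩ := hz
    exacts [hrepX γ, hZX T hz]
  · calc (S : Set (Euc d)).ncard ≤ #(univ.image rep) + #(P.biUnion Z) := by
          rw [Set.ncard_coe_finset]; exact card_union_le _ _
      _ ≤ k + #P * (d + 1) := add_le_add (card_image_le.trans (by simp))
          (card_biUnion_le.trans (sum_le_card_nsmul _ _ _ fun T _ => hZcard T))
      _ ≤ _ := by have := Nat.mul_le_mul_right (d + 1) hP; linarith
  · refine Set.eq_empty_of_forall_notMem fun u hu => ?_
    set T' : Finset (Fin k) := {γ | color (rep γ) ∈ T}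
    have hT'P : T' ∈ P :=
      mem_signPatterns_of_mem_splitDual hu (hrepy ▸ hrepS _) hT rep hrepS
    have huZ : u ∈ splitDual color (Z T') x T' := fun z hz => by
      have hzS : z ∈ S := mem_union_right _ (mem_biUnion.2 ⟨T', hT'P, hz⟩)
      simpa [T', hrep z (hZX T' hz)] using hu z hzS
    rwa [hZ T' (by simpa [T', hrepy] using hT)] at huZ

theorem exists_isColorSplit_of_forall_small (hX : X.Finite)
    (h : ∀ S ⊆ X, S.ncard ≤ (d + 1) * (∑ i ∈ range (d + 1), (k - 2).choose i) + k →
      PartByHyp color S)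
    (hx : x ∈ X) (hy : y ∈ X) (hxy : color x ≠ color y) :
    ∃ v c T, IsColorSplit color X v c T ∧ color x ∉ T ∧ color y ∈ T := by
  by_contra hno
  have hXdual : ∀ T, color y ∈ T → splitDual color X x T = ∅ := fun T hyT =>
    Set.eq_empty_of_forall_notMem fun u hu =>
      hno ⟨u, _, T, hu, notMem_of_mem_splitDual hu hx, hyT⟩
  obtain ⟨S, hSX, hScard, hxS, hyS, hSdual⟩ :=
    exists_small_subset_splitDual_eq_empty hX hx hy hxy hXdual
  obtain ⟨v, c, T, hsplit, hxT, hyT⟩ := (h S hSX hScard).exists_isColorSplit hxS hyS hxy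
  obtain ⟨u, hu⟩ := hsplit.exists_mem_splitDual hxS hxT
  exact (hSdual T hyT).subset hu

end Certificate

theorem stmt15_general {d k : ℕ} (X : Set (Euc d)) (hX : X.Finite)
    (color : Euc d → Fin k)
    (h : ∀ S ⊆ X, S.ncard ≤ (d + 1) * (∑ i ∈ Finset.range (d + 1), (k - 2).choose i) + k →
      PartByHyp color S) :
    PartByHyp color X :=
  partByHyp_of_forall_exists_isColorSplit fun _ hx _ hy hxy =>
    exists_isColorSplit_of_forall_small hX h hx hy hxy

theorem stmt15 {d k : ℕ} (hk : 2 ≤ k) (X : Set (Euc d)) (hX : X.Finite)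
    (color : Euc d → Fin k)
    (h : ∀ S ⊆ X, S.ncard ≤ (d + 1) * (∑ i ∈ Finset.range (d + 1), (k - 2).choose i) + k →
      PartByHyp color S) :
    PartByHyp color X :=
  stmt15_general X hX color h
end
end
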